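/- Let λ ∈ C with λ ∉ ℕ. Then the sl_2 Verma module M(λ) is a simple sl_2-module: every nonzero submodule equals M(λ). -/

import Mathlib

/-- f·v_i = (i+1) v_{i+1} on the Verma module M(λ) with basis v_i = single i 1. -/
noncomputable def Fop : (ℕ →₀ ℂ) →ₗ[ℂ] (ℕ →₀ ℂ) :=
  Finsupp.lsum ℂ fun i => ((i : ℂ) + 1) • Finsupp.lsingle (i + 1)

/-- e·v_i = (λ+1-i) v_{i-1} (with v_{-1} = 0). -/
noncomputable def Eop (lam : ℂ) : (ℕ →₀ ℂ) →ₗ[ℂ] (ℕ →₀ ℂ) :=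
  Finsupp.lsum ℂ fun i => if i = 0 then 0 else (lam + 1 - i) • Finsupp.lsingle (i - 1)

/-- h·v_i = (λ-2i) v_i. -/
noncomputable def Hop (lam : ℂ) : (ℕ →₀ ℂ) →ₗ[ℂ] (ℕ →₀ ℂ) :=
  Finsupp.lsum ℂ fun i => (lam - 2 * i) • Finsupp.lsingle i

/-- On the dual DM(λ): e·v_i* = i v_{i-1}*. -/
noncomputable def Ed : (ℕ →₀ ℂ) →ₗ[ℂ] (ℕ →₀ ℂ) :=
  Finsupp.lsum ℂ fun i => (i : ℂ) • Finsupp.lsingle (i - 1)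

/-- On the dual DM(λ): f·v_i* = (λ-i) v_{i+1}*. -/
noncomputable def Fd (lam : ℂ) : (ℕ →₀ ℂ) →ₗ[ℂ] (ℕ →₀ ℂ) :=
  Finsupp.lsum ℂ fun i => (lam - i) • Finsupp.lsingle (i + 1)

/-- Generalized binomial coefficient C(λ,i) = λ(λ-1)⋯(λ-i+1)/i!. -/
noncomputable def gbinom (lam : ℂ) (i : ℕ) : ℂ :=
  (∏ j ∈ Finset.range i, (lam - j)) / (Nat.factorial i : ℂ)

/-- φ_λ(v_i) = C(λ,i) v_i*. -/
noncomputable def phiMap (lam : ℂ) : (ℕ →₀ ℂ) →ₗ[ℂ] (ℕ →₀ ℂ) :=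
  Finsupp.lsum ℂ fun i => gbinom lam i • Finsupp.lsingle i

/-- ψ_λ(v_i*) = 0 for i ≤ λ, (-1)^i C(i,i-λ-1) v_i for i > λ. -/
noncomputable def psiMap (n : ℕ) : (ℕ →₀ ℂ) →ₗ[ℂ] (ℕ →₀ ℂ) :=
  Finsupp.lsum ℂ fun i =>
    (if i ≤ n then (0 : ℂ) else (-1) ^ i * (Nat.choose i (i - n - 1) : ℂ)) • Finsupp.lsingle i

/-!
Applying `e` to a nonzero vector whose top coefficient sits at `v_{n+1}` produces a vector whose
top coefficient sits at `v_n`, scaled by `λ - n ≠ 0`; iterating, every nonzero submodule contains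
`v_0`. Since the coefficients `i + 1` of `f` never vanish, `f` then generates every `v_i` from `v_0`.
-/

section

open Finsupp

lemma Eop_apply (lam : ℂ) (x : ℕ →₀ ℂ) (j : ℕ) : Eop lam x j = (lam - j) * x (j + 1) := by
  induction x using Finsupp.induction_linear with
  | zero => simp
  | add f g hf hg => simp [hf, hg, mul_add]
  | single i c =>
    rcases i with _ | i
    · simp [Eop]
    · simp only [Eop, lsum_single, if_neg (Nat.succ_ne_zero i), LinearMap.smul_apply,
        lsingle_apply, smul_single, smul_eq_mul, single_apply, Nat.add_sub_cancel,
        Nat.add_right_cancel_iff]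
      split_ifs with h <;> simp [h]

lemma Fop_single (i : ℕ) : Fop (single i 1) = single (i + 1) ((i : ℂ) + 1) := by
  simp [Fop]

variable {lam : ℂ} {p : Submodule ℂ (ℕ →₀ ℂ)}

lemma single_one_mem_of_single_mem {i : ℕ} {c : ℂ} (hc : c ≠ 0) (h : single i c ∈ p) :
    single i 1 ∈ p := by
  rwa [← smul_single_one, Submodule.smul_mem_iff p hc] at h

lemma single_zero_mem_of_Eop_mem (hlam : ∀ n : ℕ, lam ≠ n) (hE : ∀ x ∈ p, Eop lam x ∈ p)
    {x : ℕ →₀ ℂ} (hx : x ∈ p) (hx0 : x ≠ 0) : single 0 1 ∈ p := by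
  obtain ⟨n, hn⟩ : ∃ n, ∀ i, n < i → x i = 0 := by
    obtain ⟨n, hn⟩ := x.support.bddAbove
    exact ⟨n, fun i hi => notMem_support_iff.1 fun h => (hn h).not_gt hi⟩
  induction n generalizing x with
  | zero =>
    have hx_eq : x = single 0 (x 0) := support_subset_singleton.1 fun i hi => by
      by_contra h
      exact mem_support_iff.1 hi (hn i (Nat.pos_of_ne_zero (by simpa using h)))
    have hx00 : x 0 ≠ 0 := fun h => hx0 (by rw [hx_eq, h, single_zero])
    exact single_one_mem_of_single_mem hx00 (hx_eq ▸ hx)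
  | succ n ih =>
    by_cases htop : x (n + 1) = 0
    · refine ih hx hx0 fun i hi => ?_
      rcases (Nat.succ_le_of_lt hi).eq_or_lt with rfl | hi'
      exacts [htop, hn i hi']
    · have hEn : Eop lam x n ≠ 0 := by
        rw [Eop_apply]
        exact mul_ne_zero (sub_ne_zero.2 (hlam n)) htop
      refine ih (hE x hx) (fun h => hEn (by rw [h, coe_zero, Pi.zero_apply])) fun i hi => ?_
      rw [Eop_apply, hn (i + 1) (by omega), mul_zero]

lemma single_one_mem_of_Fop_mem (hF : ∀ x ∈ p, Fop x ∈ p) (h0 : single 0 1 ∈ p) (i : ℕ) :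
    single i 1 ∈ p := by
  induction i with
  | zero => exact h0
  | succ i ih =>
    refine single_one_mem_of_single_mem (Nat.cast_add_one_ne_zero i) ?_
    simpa [Fop_single] using hF _ ih

lemma eq_top_of_single_one_mem (h : ∀ i, single i 1 ∈ p) : p = ⊤ := by
  rw [eq_top_iff, ← (Finsupp.basisSingleOne (R := ℂ) (ι := ℕ)).span_eq, Submodule.span_le]
  rintro _ ⟨i, rfl⟩
  simpa using h i

end

/-- For λ ∉ ℕ the Verma module M(λ) is a simple sl₂-module: every subspace invariant
under e, f, h is 0 or all of M(λ). -/
theorem verma_simple_of_not_nat (lam : ℂ) (hlam : ∀ n : ℕ, lam ≠ n) :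
    ∀ p : Submodule ℂ (ℕ →₀ ℂ),
      (∀ x ∈ p, Eop lam x ∈ p ∧ Fop x ∈ p ∧ Hop lam x ∈ p) →
      p = ⊥ ∨ p = ⊤ := by
  intro p hp
  refine or_iff_not_imp_left.2 fun hbot => ?_
  obtain ⟨x, hx, hx0⟩ := (Submodule.ne_bot_iff p).1 hbot
  have h0 := single_zero_mem_of_Eop_mem hlam (fun y hy => (hp y hy).1) hx hx0
  exact eq_top_of_single_one_mem (single_one_mem_of_Fop_mem (fun y hy => (hp y hy).2.1) h0)
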